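/- Let q, t ∈ ℂ with 0 < |q| < 1 and q^a t^b ≠ 1 for all pairs of integers (a,b) ≠ (0,0). Let λ = (λ₁,λ₂) and μ = (μ₁,μ₂) be partitions (integers with λ₁ ≥ λ₂ ≥ 0, μ₁ ≥ μ₂ ≥ 0) such that λ/μ is a horizontal strip, i.e. μ₂ ≤ λ₂ ≤ μ₁ ≤ λ₁; set ℓ = (λ₁−μ₁)+(λ₂−μ₂), m = μ₁−μ₂ and j = λ₂−μ₂, and set λ₃ = μ₃ = 0. Then ((q;q)_ℓ/(t;q)_ℓ)·φ_{λ/μ} = c_j^{(ℓ)}(q^m), where both sides are complex numbers. -/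

import Mathlib

/-!
Comparison of the coefficient `c_j^{(ℓ)}(q^m)` with Macdonald's Pieri coefficient
`φ_{λ/μ}` for a horizontal strip `λ/μ` of two-row partitions, over `ℂ` with `0 < |q| < 1`.
-/

noncomputable section

/-- The finite `q`-Pochhammer symbol `(a;q)_n = ∏_{i=0}^{n-1}(1 - a qⁱ)`. -/
def poch (q a : ℂ) (n : ℕ) : ℂ := ∏ i ∈ Finset.range n, (1 - a * q ^ i)

/-- The infinite `q`-Pochhammer symbol `(a;q)_∞ = ∏_{i=0}^{∞}(1 - a qⁱ)`
(a convergent product when `|q| < 1`). -/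
def pochInf (q a : ℂ) : ℂ := ∏' i : ℕ, (1 - a * q ^ i)

/-- Macdonald's function `f(u) = (tu;q)_∞ / (qu;q)_∞`. -/
def f (q t u : ℂ) : ℂ := pochInf q (t * u) / pochInf q (q * u)

/-- The `q,t`-binomial coefficient `[ℓ j]_{q,t}`. -/
def qtBinom (q t : ℂ) (l j : ℕ) : ℂ :=
  (poch q q l / poch q t l) / ((poch q q j / poch q t j) * (poch q q (l - j) / poch q t (l - j)))

/-- The coefficient `c_j^{(ℓ)}(q^m)`. -/
def c (q t : ℂ) (l j m : ℕ) : ℂ :=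
  qtBinom q t l j
    * (poch q (q ^ ((m : ℤ) - j + 1)) j / poch q (t * q ^ ((m : ℤ) - j)) j)
    * (poch q (t ^ 2 * q ^ ((m : ℤ) + l - 2 * j)) j / poch q (t * q ^ ((m : ℤ) + l - 2 * j + 1)) j)

/-- Macdonald's Pieri coefficient
`φ_{λ/μ} = ∏_{1 ≤ i ≤ k ≤ 2} (f(q^{λᵢ−λₖ}t^{k−i})/f(q^{λᵢ−μₖ}t^{k−i}))
· (f(q^{μᵢ−μ_{k+1}}t^{k−i})/f(q^{μᵢ−λ_{k+1}}t^{k−i}))`,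
where `lam, mu : ℕ → ℤ` record the parts (with the convention `λ₃ = μ₃ = 0`). -/
def phi (q t : ℂ) (lam mu : ℕ → ℤ) : ℂ :=
  ∏ i ∈ Finset.Icc 1 2, ∏ k ∈ Finset.Icc i 2,
    (f q t (q ^ (lam i - lam k) * t ^ (k - i)) / f q t (q ^ (lam i - mu k) * t ^ (k - i)))
      * (f q t (q ^ (mu i - mu (k + 1)) * t ^ (k - i))
          / f q t (q ^ (mu i - lam (k + 1)) * t ^ (k - i)))

lemma aux_summable (q a : ℂ) (hq : ‖q‖ < 1) :
    Summable fun n : ℕ => Complex.log (1 - a * q ^ n) := by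
  have hg : Summable fun n : ℕ => 3 / 2 * (‖a‖ * ‖q‖ ^ n) :=
    (((summable_geometric_of_lt_one (norm_nonneg q) hq).mul_left ‖a‖).mul_left (3 / 2))
  refine .of_norm_bounded_eventually_nat hg ?_
  have ht : Filter.Tendsto (fun n : ℕ => ‖a‖ * ‖q‖ ^ n) Filter.atTop (nhds 0) := by
    simpa using (tendsto_pow_atTop_nhds_zero_of_norm_lt_one (by simpa using hq)).const_mul ‖a‖
  have hev : ∀ᶠ n in Filter.atTop, ‖a‖ * ‖q‖ ^ n < 1 / 2 :=
    ht.eventually_lt_const (by norm_num)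
  filter_upwards [hev] with n hn
  have hza : ‖-(a * q ^ n)‖ ≤ 1 / 2 := by
    rw [norm_neg, norm_mul, norm_pow]; exact hn.le
  have h := Complex.norm_log_one_add_half_le_self hza
  rw [norm_neg, norm_mul, norm_pow] at h
  simpa [sub_eq_add_neg] using h

lemma aux_exp (q a : ℂ) (hq : ‖q‖ < 1) (h : ∀ i : ℕ, 1 - a * q ^ i ≠ 0) :
    pochInf q a = Complex.exp (∑' n : ℕ, Complex.log (1 - a * q ^ n)) := by
  have h2 := Complex.cexp_tsum_eq_tprod (f := fun n => 1 - a * q ^ n)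
    (fun n => h n) (aux_summable q a hq)
  exact h2.symm

lemma aux_ne (q a : ℂ) (hq : ‖q‖ < 1) (h : ∀ i : ℕ, 1 - a * q ^ i ≠ 0) :
    pochInf q a ≠ 0 := by
  rw [aux_exp q a hq h]; exact Complex.exp_ne_zero _

lemma poch_ne (q a : ℂ) (n : ℕ) (h : ∀ i : ℕ, 1 - a * q ^ i ≠ 0) : poch q a n ≠ 0 :=
  Finset.prod_ne_zero_iff.mpr fun i _ => h i

lemma aux_shift (q a : ℂ) (hq : ‖q‖ < 1) (h : ∀ i : ℕ, 1 - a * q ^ i ≠ 0) (n : ℕ) :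
    pochInf q a = poch q a n * pochInf q (a * q ^ n) := by
  have h2 : ∀ i : ℕ, 1 - a * q ^ n * q ^ i ≠ 0 := by
    intro i; have := h (n + i); rw [pow_add] at this; simpa [mul_assoc] using this
  rw [aux_exp q a hq h, aux_exp q _ hq h2,
    ← Summable.sum_add_tsum_nat_add n (aux_summable q a hq), Complex.exp_add]
  congr 1
  · rw [Complex.exp_sum]
    exact (Finset.prod_congr rfl fun i _ => Complex.exp_log (h i))
  · congr 1
    exact tsum_congr fun i => by rw [pow_add]; ring_nf

lemma fratio (q t u : ℂ) (hq : ‖q‖ < 1)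
    (h1 : ∀ i : ℕ, 1 - t * u * q ^ i ≠ 0) (h2 : ∀ i : ℕ, 1 - q * u * q ^ i ≠ 0) (n : ℕ) :
    f q t u / f q t (q ^ n * u) = poch q (t * u) n / poch q (q * u) n := by
  have s1 : ∀ i : ℕ, 1 - t * u * q ^ n * q ^ i ≠ 0 := by
    intro i; have := h1 (n + i); rw [pow_add] at this; simpa [mul_assoc] using this
  have s2 : ∀ i : ℕ, 1 - q * u * q ^ n * q ^ i ≠ 0 := by
    intro i; have := h2 (n + i); rw [pow_add] at this; simpa [mul_assoc] using this
  have e1 : t * (q ^ n * u) = t * u * q ^ n := by ring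
  have e2 : q * (q ^ n * u) = q * u * q ^ n := by ring
  have X := aux_ne q (t * u * q ^ n) hq s1
  have Y := aux_ne q (q * u * q ^ n) hq s2
  have B := poch_ne q (q * u) n h2
  unfold f
  rw [e1, e2, aux_shift q (t * u) hq h1 n, aux_shift q (q * u) hq h2 n]
  field_simp
  rw [mul_div_mul_right _ _ (by rw [show u * q ^ n * q = q * u * q ^ n by ring]; exact Y)]

/-- **Pieri coefficient comparison (Proposition `convtoMac`).**
Let `q, t ∈ ℂ` with `0 < |q| < 1` and `q^a t^b ≠ 1` for all integer pairs `(a,b) ≠ (0,0)`.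
Let `λ = (λ₁,λ₂)`, `μ = (μ₁,μ₂)` be partitions with `μ₂ ≤ λ₂ ≤ μ₁ ≤ λ₁` (a horizontal strip),
and set `ℓ = (λ₁−μ₁)+(λ₂−μ₂)`, `m = μ₁−μ₂`, `j = λ₂−μ₂` (and `λ₃ = μ₃ = 0`).  Then
`((q;q)_ℓ/(t;q)_ℓ)·φ_{λ/μ} = c_j^{(ℓ)}(q^m)`. -/
theorem poch_mul_phi_eq_c (q t : ℂ) (hq0 : 0 < ‖q‖) (hq1 : ‖q‖ < 1)
    (hqt : ∀ a b : ℤ, (a, b) ≠ (0, 0) → q ^ a * t ^ b ≠ 1)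
    (l1 l2 m1 m2 : ℕ) (h1 : m2 ≤ l2) (h2 : l2 ≤ m1) (h3 : m1 ≤ l1) :
    (poch q q ((l1 - m1) + (l2 - m2)) / poch q t ((l1 - m1) + (l2 - m2)))
      * phi q t (fun i => if i = 1 then (l1 : ℤ) else if i = 2 then (l2 : ℤ) else 0)
                (fun i => if i = 1 then (m1 : ℤ) else if i = 2 then (m2 : ℤ) else 0)
    = c q t ((l1 - m1) + (l2 - m2)) (l2 - m2) (m1 - m2) := by
  have hq0' : q ≠ 0 := by
    intro h; rw [h] at hq0; simp at hq0
  have hq1' : ‖q‖ < 1 := by exact hq1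
  have key : ∀ (e : ℤ) (b : ℕ), (e ≠ 0 ∨ b ≠ 0) → (1 : ℂ) - q ^ e * t ^ b ≠ 0 := by
    intro e b hb hzero
    refine hqt e b ?_ ?_
    · simp only [ne_eq, Prod.mk.injEq, not_and]
      intro he hbz
      rcases hb with h | h
      · exact h he
      · omega
    · rw [zpow_natCast t b]
      linear_combination -hzero
  have cond1T : ∀ i : ℕ, 1 - t * (1 : ℂ) * q ^ i ≠ 0 := by
    intro i
    have e : t * (1 : ℂ) * q ^ i = q ^ (i : ℤ) * t ^ 1 := by
      rw [zpow_natCast q i, pow_one]; ring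
    rw [e]; exact key _ _ (Or.inr one_ne_zero)
  have cond1Q : ∀ i : ℕ, 1 - q * (1 : ℂ) * q ^ i ≠ 0 := by
    intro i
    have e : q * (1 : ℂ) * q ^ i = q ^ ((i : ℤ) + 1) * t ^ 0 := by
      rw [zpow_add₀ hq0', zpow_natCast q i, zpow_one, pow_zero]; ring
    rw [e]; exact key _ _ (Or.inl (by omega))
  have cond2T : ∀ i : ℕ, 1 - t * (q ^ ((m1 : ℤ) - ↑l2)) * q ^ i ≠ 0 := by
    intro i
    have e : t * (q ^ ((m1 : ℤ) - ↑l2)) * q ^ i = q ^ ((m1 : ℤ) - ↑l2 + i) * t ^ 1 := by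
      rw [zpow_add₀ hq0', zpow_natCast q i, pow_one]; ring
    rw [e]; exact key _ _ (Or.inr one_ne_zero)
  have cond2Q : ∀ i : ℕ, 1 - q * (q ^ ((m1 : ℤ) - ↑l2)) * q ^ i ≠ 0 := by
    intro i
    have e : q * (q ^ ((m1 : ℤ) - ↑l2)) * q ^ i = q ^ ((m1 : ℤ) - ↑l2 + 1 + i) * t ^ 0 := by
      rw [zpow_add₀ hq0', zpow_add₀ hq0', zpow_natCast q i, zpow_one, pow_zero]; ring
    rw [e]; exact key _ _ (Or.inl (by omega))
  have cond3T : ∀ i : ℕ, 1 - t * (q ^ ((l1 : ℤ) - ↑l2) * t) * q ^ i ≠ 0 := by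
    intro i
    have e : t * (q ^ ((l1 : ℤ) - ↑l2) * t) * q ^ i = q ^ ((l1 : ℤ) - ↑l2 + i) * t ^ 2 := by
      rw [zpow_add₀ hq0', zpow_natCast q i]; ring
    rw [e]; exact key _ _ (Or.inr two_ne_zero)
  have cond3Q : ∀ i : ℕ, 1 - q * (q ^ ((l1 : ℤ) - ↑l2) * t) * q ^ i ≠ 0 := by
    intro i
    have e : q * (q ^ ((l1 : ℤ) - ↑l2) * t) * q ^ i = q ^ ((l1 : ℤ) - ↑l2 + 1 + i) * t ^ 1 := by
      rw [zpow_add₀ hq0', zpow_add₀ hq0', zpow_natCast q i, zpow_one, pow_one]; ring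
    rw [e]; exact key _ _ (Or.inr one_ne_zero)
  have cond4T : ∀ i : ℕ, 1 - t * (q ^ m1 * t) * q ^ i ≠ 0 := by
    intro i
    have e : t * (q ^ m1 * t) * q ^ i = q ^ ((m1 : ℤ) + i) * t ^ 2 := by
      rw [zpow_add₀ hq0', zpow_natCast q i, zpow_natCast q m1]; ring
    rw [e]; exact key _ _ (Or.inr two_ne_zero)
  have cond4Q : ∀ i : ℕ, 1 - q * (q ^ m1 * t) * q ^ i ≠ 0 := by
    intro i
    have e : q * (q ^ m1 * t) * q ^ i = q ^ ((m1 : ℤ) + 1 + i) * t ^ 1 := by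
      rw [zpow_add₀ hq0', zpow_add₀ hq0', zpow_natCast q i, zpow_natCast q m1, zpow_one,
        pow_one]; ring
    rw [e]; exact key _ _ (Or.inr one_ne_zero)
  have cond5T : ∀ i : ℕ, 1 - t * q ^ m2 * q ^ i ≠ 0 := by
    intro i
    have e : t * q ^ m2 * q ^ i = q ^ ((m2 : ℤ) + i) * t ^ 1 := by
      rw [zpow_add₀ hq0', zpow_natCast q i, zpow_natCast q m2, pow_one]; ring
    rw [e]; exact key _ _ (Or.inr one_ne_zero)
  have cond5Q : ∀ i : ℕ, 1 - q * q ^ m2 * q ^ i ≠ 0 := by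
    intro i
    have e : q * q ^ m2 * q ^ i = q ^ ((m2 : ℤ) + 1 + i) * t ^ 0 := by
      rw [zpow_add₀ hq0', zpow_add₀ hq0', zpow_natCast q i, zpow_natCast q m2, zpow_one,
        pow_zero]; ring
    rw [e]; exact key _ _ (Or.inl (by omega))
  have fne4 : f q t (q ^ m1 * t) ≠ 0 :=
    div_ne_zero (aux_ne q _ hq1' cond4T) (aux_ne q _ hq1' cond4Q)
  have fne5 : f q t (q ^ m2) ≠ 0 :=
    div_ne_zero (aux_ne q _ hq1' cond5T) (aux_ne q _ hq1' cond5Q)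
  have hR1 : f q t 1 / f q t (q ^ ((l1 : ℤ) - ↑m1))
      = poch q (t * 1) (l1 - m1) / poch q (q * 1) (l1 - m1) := by
    rw [show (q : ℂ) ^ ((l1 : ℤ) - ↑m1) = q ^ (l1 - m1 : ℕ) * 1 from by
      rw [mul_one, ← zpow_natCast q (l1 - m1)]; congr 1; omega]
    exact fratio q t 1 hq1' cond1T cond1Q (l1 - m1)
  have hR4 : f q t 1 / f q t (q ^ ((l2 : ℤ) - ↑m2))
      = poch q (t * 1) (l2 - m2) / poch q (q * 1) (l2 - m2) := by
    rw [show (q : ℂ) ^ ((l2 : ℤ) - ↑m2) = q ^ (l2 - m2 : ℕ) * 1 from by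
      rw [mul_one, ← zpow_natCast q (l2 - m2)]; congr 1; omega]
    exact fratio q t 1 hq1' cond1T cond1Q (l2 - m2)
  have hR2' : f q t (q ^ ((m1 : ℤ) - ↑l2)) / f q t (q ^ ((m1 : ℤ) - ↑m2))
      = poch q (t * q ^ ((m1 : ℤ) - ↑l2)) (l2 - m2) / poch q (q * q ^ ((m1 : ℤ) - ↑l2)) (l2 - m2) := by
    rw [show (q : ℂ) ^ ((m1 : ℤ) - ↑m2) = q ^ (l2 - m2 : ℕ) * q ^ ((m1 : ℤ) - ↑l2) from by
      rw [← zpow_natCast q (l2 - m2), ← zpow_add₀ hq0']; congr 1; omega]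
    exact fratio q t _ hq1' cond2T cond2Q (l2 - m2)
  have hR2 : f q t (q ^ ((m1 : ℤ) - ↑m2)) / f q t (q ^ ((m1 : ℤ) - ↑l2))
      = poch q (q * q ^ ((m1 : ℤ) - ↑l2)) (l2 - m2) / poch q (t * q ^ ((m1 : ℤ) - ↑l2)) (l2 - m2) := by
    rw [← inv_div (f q t (q ^ ((m1 : ℤ) - ↑l2))) (f q t (q ^ ((m1 : ℤ) - ↑m2))), hR2', inv_div]
  have hR3 : f q t (q ^ ((l1 : ℤ) - ↑l2) * t) / f q t (q ^ ((l1 : ℤ) - ↑m2) * t)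
      = poch q (t * (q ^ ((l1 : ℤ) - ↑l2) * t)) (l2 - m2)
        / poch q (q * (q ^ ((l1 : ℤ) - ↑l2) * t)) (l2 - m2) := by
    rw [show (q : ℂ) ^ ((l1 : ℤ) - ↑m2) * t = q ^ (l2 - m2 : ℕ) * (q ^ ((l1 : ℤ) - ↑l2) * t) from by
      rw [← mul_assoc, ← zpow_natCast q (l2 - m2), ← zpow_add₀ hq0']; congr 2; omega]
    exact fratio q t _ hq1' cond3T cond3Q (l2 - m2)
  have hIcc12 : (Finset.Icc 1 2 : Finset ℕ) = {1, 2} := rfl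
  have hIcc22 : (Finset.Icc 2 2 : Finset ℕ) = {2} := rfl
  rw [phi, hIcc12]
  rw [Finset.prod_pair (by norm_num)]
  rw [hIcc12, hIcc22, Finset.prod_pair (by norm_num), Finset.prod_singleton]
  norm_num
  rw [hR1, hR2, hR3, hR4, div_self fne4, div_self fne5]
  rw [c, qtBinom]
  rw [show (l1 - m1 + (l2 - m2)) - (l2 - m2) = l1 - m1 from by omega]
  rw [show (q : ℂ) ^ ((↑(m1 - m2) : ℤ) - ↑(l2 - m2) + 1) = q * q ^ ((m1 : ℤ) - ↑l2) from by
    rw [show ((↑(m1 - m2) : ℤ) - ↑(l2 - m2) + 1) = ((m1 : ℤ) - ↑l2) + 1 from by omega,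
      zpow_add₀ hq0', zpow_one]; ring]
  rw [show t * (q : ℂ) ^ ((↑(m1 - m2) : ℤ) - ↑(l2 - m2)) = t * q ^ ((m1 : ℤ) - ↑l2) from by
    congr 2; omega]
  rw [show t ^ 2 * (q : ℂ) ^ ((↑(m1 - m2) : ℤ) + ↑(l1 - m1 + (l2 - m2)) - 2 * ↑(l2 - m2))
      = t * (q ^ ((l1 : ℤ) - ↑l2) * t) from by
    rw [show ((↑(m1 - m2) : ℤ) + ↑(l1 - m1 + (l2 - m2)) - 2 * ↑(l2 - m2)) = (l1 : ℤ) - ↑l2 from by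
      omega]; ring]
  rw [show t * (q : ℂ) ^ ((↑(m1 - m2) : ℤ) + ↑(l1 - m1 + (l2 - m2)) - 2 * ↑(l2 - m2) + 1)
      = q * (q ^ ((l1 : ℤ) - ↑l2) * t) from by
    rw [show ((↑(m1 - m2) : ℤ) + ↑(l1 - m1 + (l2 - m2)) - 2 * ↑(l2 - m2) + 1)
        = ((l1 : ℤ) - ↑l2) + 1 from by omega, zpow_add₀ hq0', zpow_one]; ring]
  rw [mul_one t, mul_one q]
  simp only [div_eq_mul_inv, mul_inv, inv_inv]
  ring


end
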